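/- arXiv:2509.21127 — 2 statements merged into one kernel-verified Lean document; each statement's English description precedes it below -/
import Mathlib

section
/- Let A and B be abelian groups equipped with decreasing ℤ-indexed filtrations by subgroups (F^s A)_{s : ℤ} and (F^s B)_{s : ℤ}, and let f : A → B be a group homomorphism with f(F^s A) ⊆ F^s B for all s. Assume: (1) f restricts to a bijection from ⋂_{s : ℤ} F^s A onto ⋂_{s : ℤ} F^s B; (2) the homomorphism ∏_{s : ℤ} F^s A → ∏_{s : ℤ} F^s A sending (a_s)_s to (a_s - a_{s+1})_s (using the inclusions F^{s+1} A ⊆ F^s A) is surjective (i.e. lim¹_s F^s A = 0); (3) for every s, the map F^s A / F^{s+1} A → F^s B / F^{s+1} B induced by f is an isomorphism; (4) both filtrations are exhaustive, i.e. ⋃_{s : ℤ} F^s A = A and ⋃_{s : ℤ} F^s B = B. Then f is an isomorphism of abelian groups, and moreover f(F^s A) = F^s B for every s. -/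
/-! Injectivity: an element of the kernel lies in some `FA s`, and graded injectivity pushes it
into every deeper stage, hence into `⋂ₛ FA s`, where `f` is injective.

Surjectivity onto `FB s`: graded surjectivity lets one peel off, one filtration degree at a time,
preimages `x n ∈ FA (s + n)` of successive leading terms of `b`. Vanishing of `lim¹` provides an
`a ∈ FA s` that is a "sum" of the series `∑ x n`, in the sense that `a - ∑_{i<n} x i ∈ FA (s + n)`.
The error `b - f a` then lies in every `FB t`, so it is hit by an element of `⋂ₛ FA s`. -/

open Finset Function

variable {A B : Type*} [AddCommGroup A] [AddCommGroup B]

def AddMonoidHom.subquotientMap (f : A →+ B) {P P' : AddSubgroup A} {Q Q' : AddSubgroup B}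
    (hPQ : ∀ a ∈ P, f a ∈ Q) (hPQ' : ∀ a ∈ P', f a ∈ Q') :
    P ⧸ P'.addSubgroupOf P →+ Q ⧸ Q'.addSubgroupOf Q :=
  QuotientAddGroup.map (P'.addSubgroupOf P) (Q'.addSubgroupOf Q)
    ((f.comp P.subtype).codRestrict Q (fun x => hPQ x x.2))
    (fun x hx => AddSubgroup.mem_addSubgroupOf.mpr
      (hPQ' (x : A) (AddSubgroup.mem_addSubgroupOf.mp hx)))

namespace AddMonoidHom

variable (f : A →+ B) {P P' : AddSubgroup A} {Q Q' : AddSubgroup B}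
  {hPQ : ∀ a ∈ P, f a ∈ Q} {hPQ' : ∀ a ∈ P', f a ∈ Q'}

theorem mem_of_subquotientMap_injective (hinj : Injective (f.subquotientMap hPQ hPQ'))
    {a : A} (ha : a ∈ P) (hfa : f a ∈ Q') : a ∈ P' := by
  have hzero : f.subquotientMap hPQ hPQ' (QuotientAddGroup.mk ⟨a, ha⟩) = 0 :=
    (QuotientAddGroup.eq_zero_iff _).2 (AddSubgroup.mem_addSubgroupOf.2 hfa)
  have := (injective_iff_map_eq_zero _).1 hinj _ hzero
  rwa [QuotientAddGroup.eq_zero_iff, AddSubgroup.mem_addSubgroupOf] at this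

theorem exists_sub_mem_of_subquotientMap_surjective
    (hsurj : Surjective (f.subquotientMap hPQ hPQ')) {b : B} (hb : b ∈ Q) :
    ∃ a ∈ P, b - f a ∈ Q' := by
  obtain ⟨q, hq⟩ := hsurj (QuotientAddGroup.mk ⟨b, hb⟩)
  obtain ⟨a, rfl⟩ := QuotientAddGroup.mk_surjective q
  refine ⟨a, a.2, ?_⟩
  have hmem : -f a + b ∈ Q' := AddSubgroup.mem_addSubgroupOf.1 (QuotientAddGroup.eq.1 hq)
  rwa [neg_add_eq_sub] at hmem

end AddMonoidHom

/-- Surjectivity of `∏ₛ F s → ∏ₛ F s, (aₛ) ↦ (aₛ - aₛ₊₁)`, whose cokernel is `lim¹ₛ F s`. -/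
def Lim1Vanishes (F : ℤ → AddSubgroup A) : Prop :=
  ∀ b : ℤ → A, (∀ s : ℤ, b s ∈ F s) →
    ∃ a : ℤ → A, (∀ s : ℤ, a s ∈ F s) ∧ ∀ s : ℤ, a s - a (s + 1) = b s

theorem Lim1Vanishes.exists_sub_sum_mem {F : ℤ → AddSubgroup A} (hF : Lim1Vanishes F) (s : ℤ)
    {x : ℕ → A} (hx : ∀ n : ℕ, x n ∈ F (s + n)) :
    ∃ a ∈ F s, ∀ n : ℕ, a - ∑ i ∈ range n, x i ∈ F (s + n) := by
  classical
  set X : ℤ → A := fun u => if s ≤ u then x (u - s).toNat else 0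
  have hXmem : ∀ u, X u ∈ F u := by
    intro u
    by_cases hu : s ≤ u
    · simpa [X, hu, show s + ((u - s).toNat : ℤ) = u by omega] using hx (u - s).toNat
    · simp [X, hu]
  have hXnat : ∀ n : ℕ, X (s + n) = x n := fun n => by simp [X]
  obtain ⟨y, hy, hyX⟩ := hF X hXmem
  have htel : ∀ n : ℕ, y s - ∑ i ∈ range n, x i = y (s + n) := by
    intro n
    have hterm : ∀ i : ℕ, y (s + i) - y (s + (i + 1 : ℕ)) = x i := fun i => by
      rw [Nat.cast_succ, ← add_assoc, hyX, hXnat]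
    rw [← sum_congr rfl fun i _ => hterm i, sum_range_sub' (fun i : ℕ => y (s + i)),
      Nat.cast_zero, add_zero, sub_sub_cancel]
  exact ⟨y s, hy s, fun n => htel n ▸ hy _⟩

theorem exists_seq_sub_map_sum_mem {GA : ℕ → AddSubgroup A} {GB : ℕ → AddSubgroup B}
    (f : A →+ B) (hstep : ∀ n : ℕ, ∀ β ∈ GB n, ∃ α ∈ GA n, β - f α ∈ GB (n + 1))
    {b : B} (hb : b ∈ GB 0) :
    ∃ x : ℕ → A, (∀ n, x n ∈ GA n) ∧ ∀ n, b - f (∑ i ∈ range n, x i) ∈ GB n := by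
  choose! g hgA hgB using hstep
  let rem : ℕ → B := fun n => Nat.rec b (fun n r => r - f (g n r)) n
  have hrem : ∀ n, rem n ∈ GB n := fun n => by
    induction n with
    | zero => exact hb
    | succ n ih => exact hgB n _ ih
  have hrem_eq : ∀ n, rem n = b - f (∑ i ∈ range n, g i (rem i)) := fun n => by
    induction n with
    | zero => simp [rem]
    | succ n ih =>
      change rem n - f (g n (rem n)) = _
      rw [ih, sum_range_succ, map_add, sub_add_eq_sub_sub, ← ih]
  exact ⟨fun n => g n (rem n), fun n => hgA n _ (hrem n), fun n => hrem_eq n ▸ hrem n⟩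

section Filtration

variable {FA : ℤ → AddSubgroup A} {FB : ℤ → AddSubgroup B} {f : A →+ B}
  {hf : ∀ s : ℤ, ∀ a ∈ FA s, f a ∈ FB s}

theorem injective_of_subquotientMap_injective (hFA : Antitone FA)
    (hinter : Set.InjOn f (⋂ s : ℤ, (FA s : Set A)))
    (hgr : ∀ s : ℤ, Injective (f.subquotientMap (hf s) (hf (s + 1))))
    (hexh : ∀ a : A, ∃ s : ℤ, a ∈ FA s) : Injective f := by
  refine (injective_iff_map_eq_zero f).2 fun a ha => ?_
  obtain ⟨s₀, hs₀⟩ := hexh a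
  have hall : ∀ t, a ∈ FA t := by
    intro t
    rcases le_total t s₀ with h | h
    · exact hFA h hs₀
    · induction t, h using Int.leInduction with
      | base => exact hs₀
      | succ n _ ih =>
        exact f.mem_of_subquotientMap_injective (hgr n) ih (ha ▸ (FB (n + 1)).zero_mem)
  exact hinter (Set.mem_iInter.2 hall) (Set.mem_iInter.2 fun t => (FA t).zero_mem)
    (ha.trans f.map_zero.symm)

theorem le_map_of_subquotientMap_surjective (hFB : Antitone FB)
    (hinter : Set.SurjOn f (⋂ s : ℤ, (FA s : Set A)) (⋂ s : ℤ, (FB s : Set B)))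
    (hlim : Lim1Vanishes FA)
    (hgr : ∀ s : ℤ, Surjective (f.subquotientMap (hf s) (hf (s + 1)))) (s : ℤ) :
    FB s ≤ (FA s).map f := by
  intro b hb
  obtain ⟨x, hxA, hxB⟩ := exists_seq_sub_map_sum_mem (GA := fun n : ℕ => FA (s + n))
    (GB := fun n : ℕ => FB (s + n)) f
    (fun n β hβ => by
      simpa only [Nat.cast_succ, ← add_assoc] using
        f.exists_sub_mem_of_subquotientMap_surjective (hgr (s + n)) hβ)
    (by simpa using hb)
  obtain ⟨a, haA, ha⟩ := hlim.exists_sub_sum_mem s hxA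
  have herr : b - f a ∈ ⋂ t : ℤ, (FB t : Set B) := by
    refine Set.mem_iInter.2 fun t => hFB (show t ≤ s + (t - s).toNat by omega) ?_
    have hsplit : b - f a = (b - f (∑ i ∈ range (t - s).toNat, x i))
        - f (a - ∑ i ∈ range (t - s).toNat, x i) := by
      rw [map_sub]; abel
    exact hsplit ▸ sub_mem (hxB _) (hf _ _ (ha _))
  obtain ⟨z, hz, hfz⟩ := hinter herr
  refine ⟨a + z, add_mem haA (Set.mem_iInter.1 hz s), ?_⟩
  rw [map_add, hfz, add_sub_cancel]

end Filtration

/-- **Boardman, Theorem 2.6.**  Let `A`, `B` be abelian groups with decreasing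
`ℤ`-indexed filtrations `FA`, `FB`, and `f : A →+ B` a filtration-preserving map.
If (1) `f` restricts to a bijection between the intersections of the filtrations,
(2) `lim¹ FA = 0` (the map `(a_s)_s ↦ (a_s - a_{s+1})_s` on `∏_s FA s` is surjective),
(3) `f` induces isomorphisms on all associated graded pieces, and
(4) both filtrations are exhaustive,
then `f` is an isomorphism carrying `FA s` onto `FB s` for every `s`. -/
theorem map_of_filtered_abelian_groups_is_iso
    {A B : Type} [AddCommGroup A] [AddCommGroup B]
    (FA : ℤ → AddSubgroup A) (FB : ℤ → AddSubgroup B)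
    (hFA : ∀ s : ℤ, FA (s + 1) ≤ FA s) (hFB : ∀ s : ℤ, FB (s + 1) ≤ FB s)
    (f : A →+ B) (hf : ∀ s : ℤ, ∀ a ∈ FA s, f a ∈ FB s)
    -- (1) `f` restricts to a bijection `⋂ₛ FA s → ⋂ₛ FB s`
    (h1 : Set.BijOn f (⋂ s : ℤ, (FA s : Set A)) (⋂ s : ℤ, (FB s : Set B)))
    -- (2) `lim¹ₛ FA s = 0`
    (h2 : ∀ b : ℤ → A, (∀ s : ℤ, b s ∈ FA s) →
      ∃ a : ℤ → A, (∀ s : ℤ, a s ∈ FA s) ∧ ∀ s : ℤ, a s - a (s + 1) = b s)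
    -- (3) the induced map on associated graded `FA s / FA (s+1) → FB s / FB (s+1)`
    -- is an isomorphism for all `s`
    (h3 : ∀ s : ℤ, Function.Bijective
      (QuotientAddGroup.map ((FA (s + 1)).addSubgroupOf (FA s))
        ((FB (s + 1)).addSubgroupOf (FB s))
        ((f.comp (FA s).subtype).codRestrict (FB s) (fun x => hf s x x.2))
        (fun x hx => AddSubgroup.mem_addSubgroupOf.mpr
          (hf (s + 1) (x : A) (AddSubgroup.mem_addSubgroupOf.mp hx)))))
    -- (4) both filtrations are exhaustive
    (h4A : ∀ a : A, ∃ s : ℤ, a ∈ FA s) (h4B : ∀ b : B, ∃ s : ℤ, b ∈ FB s) :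
    Function.Bijective f ∧ ∀ s : ℤ, (FA s).map f = FB s := by
  have hmap : ∀ s, FB s ≤ (FA s).map f :=
    le_map_of_subquotientMap_surjective (hf := hf) (antitone_int_of_succ_le hFB) h1.surjOn h2
      fun s => (h3 s).2
  refine ⟨⟨injective_of_subquotientMap_injective (hf := hf) (antitone_int_of_succ_le hFA)
    h1.injOn (fun s => (h3 s).1) h4A, fun b => ?_⟩, fun s => ?_⟩
  · obtain ⟨s, hs⟩ := h4B b
    obtain ⟨a, -, ha⟩ := hmap s hs
    exact ⟨a, ha⟩
  · exact le_antisymm (AddSubgroup.map_le_iff_le_comap.2 (hf s)) (hmap s)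
end

section
/- Let (A, E, i, j, ∂) be an unrolled exact couple of bigraded abelian groups. Then for all integers n and s, the kernel of the composite homomorphism A n s → G n → G n / F^{s+1} G n (the structure map κ_s followed by the quotient map) equals the preimage j⁻¹(B_∞^{n,s}) ⊆ A n s. Consequently κ_s and j induce an isomorphism of abelian groups F^s G n / F^{s+1} G n ≅ ker(∂ : E n s → A (n-1) (s+1)) / B_∞^{n,s}; in particular the associated graded of the abutment filtration injects into E_∞^{n,s} := Z_∞^{n,s} / B_∞^{n,s}. -/
/-!
An element `a ∈ A n s` has `κ_s a ∈ F^{s+1} = κ_s(im i)` exactly when `a ∈ ker κ_s + im i`.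
Since `ker κ_s` is the union of the kernels of the transition maps `A n s → A n (s-r)`,
we get `B_∞ = j(ker κ_s)`, and as `im i = ker j` both conditions become
`a ∈ j⁻¹(B_∞)`. The isomorphism then compares the two surjections
`A n s → F^s/F^{s+1}` and `A n s → ker ∂ / B_∞`, which now have the same kernel.
-/

/-- An unrolled exact couple of bigraded abelian groups. -/
structure UnrolledExactCouple where
  A : ℤ → ℤ → AddCommGrpCat
  E : ℤ → ℤ → AddCommGrpCat
  i : ∀ n s : ℤ, A n (s + 1) →+ A n s
  j : ∀ n s : ℤ, A n s →+ E n s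
  d : ∀ n s : ℤ, E n s →+ A (n - 1) (s + 1)
  exact_ij : ∀ n s : ℤ, (i n s).range = (j n s).ker
  exact_jd : ∀ n s : ℤ, (j n s).range = (d n s).ker
  exact_di : ∀ n s : ℤ, (d n s).range = (i (n - 1) s).ker

namespace UnrolledExactCouple

variable (C : UnrolledExactCouple)

/-- Transport along an equality of the filtration index. -/
def cast (n : ℤ) {s t : ℤ} (h : s = t) : C.A n s →+ C.A n t := by
  subst h; exact AddMonoidHom.id _

/-- The `r`-fold composite `i^r : A n (s+r) →+ A n s` of the maps `i`. -/
def ipow (n : ℤ) : ∀ (r : ℕ) (s : ℤ), C.A n (s + (r : ℤ)) →+ C.A n s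
  | 0, s => C.cast n (by simp)
  | r + 1, s =>
      ((C.i n s).comp ((ipow n r (s + 1)).comp (C.cast n (by push_cast; ring))))

/-- The transition map `A n t →+ A n s` for `s ≤ t`, a composite of the maps `i`. -/
def tr (n : ℤ) (t s : ℤ) (h : s ≤ t) : C.A n t →+ C.A n s :=
  (C.ipow n (t - s).toNat s).comp
    (C.cast n (by rw [Int.toNat_of_nonneg (by omega : (0:ℤ) ≤ t - s)]; omega))

/-- The colimit `G n` of the direct system `(A n s)` (s decreasing) along the maps `i`. -/
def G (n : ℤ) : Type :=
  AddCommGroup.DirectLimit (fun s : ℤᵒᵈ => C.A n (OrderDual.ofDual s))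
    (fun s t h => C.tr n (OrderDual.ofDual s) (OrderDual.ofDual t) h)

noncomputable instance (n : ℤ) : AddCommGroup (C.G n) := by
  unfold G; infer_instance

/-- The structure map `κ_s : A n s →+ G n`. -/
noncomputable def kappa (n s : ℤ) : C.A n s →+ C.G n :=
  AddCommGroup.DirectLimit.of (fun s : ℤᵒᵈ => C.A n (OrderDual.ofDual s))
    (fun s t h => C.tr n (OrderDual.ofDual s) (OrderDual.ofDual t) h) (OrderDual.toDual s)

/-- The abutment filtration `F^s G n := im κ_s`. -/
noncomputable def F (n s : ℤ) : AddSubgroup (C.G n) :=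
  (C.kappa n s).range

/-- The `r`-cycles `Z_r^{n,s} := ∂⁻¹(im(i^r : A (n-1) (s+1+r) → A (n-1) (s+1)))`. -/
def Z (n s : ℤ) (r : ℕ) : AddSubgroup (C.E n s) :=
  ((C.ipow (n - 1) r (s + 1)).range).comap (C.d n s)

/-- The `r`-boundaries `B_r^{n,s} := j(ker(i^r : A n s → A n (s-r)))`. -/
def B (n s : ℤ) (r : ℕ) : AddSubgroup (C.E n s) :=
  ((C.tr n s (s - (r : ℤ)) (by omega)).ker).map (C.j n s)

/-- The permanent cycles `Z_∞^{n,s} = ⋂_r Z_r^{n,s}`. -/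
def Zinf (n s : ℤ) : AddSubgroup (C.E n s) := ⨅ r : ℕ, C.Z n s r

/-- The infinite boundaries `B_∞^{n,s} = ⋃_r B_r^{n,s}`. -/
def Binf (n s : ℤ) : AddSubgroup (C.E n s) := ⨆ r : ℕ, C.B n s r

/-- Conditional convergence: for every `n` the limit and `lim¹` of the tower
`(A n s)_s` vanish, i.e. the map `(a_s)_s ↦ (a_s - i(a_{s+1}))_s` is bijective. -/
def ConvergesConditionally : Prop :=
  ∀ n : ℤ, Function.Bijective
    (fun (a : ∀ s : ℤ, C.A n s) => fun s : ℤ => a s - C.i n s (a (s + 1)))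

/-- Strong convergence. -/
def ConvergesStrongly : Prop :=
  (∀ n : ℤ,
      (⨅ s : ℤ, C.F n s) = ⊥ ∧
      (∀ b : ℤ → C.G n, (∀ s, b s ∈ C.F n s) →
        ∃ x : ℤ → C.G n, (∀ s, x s ∈ C.F n s) ∧ ∀ s, x s - x (s + 1) = b s)) ∧
    (∀ n s : ℤ, C.Zinf n s = (C.d n s).ker)

end UnrolledExactCouple

open QuotientAddGroup

theorem exists_addEquiv_comp_eq_of_ker_eq {A P Q : Type*} [AddGroup A] [AddGroup P]
    [AddGroup Q] {f : A →+ P} {g : A →+ Q} (hf : Function.Surjective f)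
    (hg : Function.Surjective g) (h : f.ker = g.ker) :
    ∃ e : P ≃+ Q, ∀ a, e (f a) = g a := by
  refine ⟨(quotientKerEquivOfSurjective f hf).symm.trans
    ((quotientAddEquivOfEq h).trans (quotientKerEquivOfSurjective g hg)), fun a => ?_⟩
  have hf_symm : (quotientKerEquivOfSurjective f hf).symm (f a) = (a : A ⧸ f.ker) :=
    (AddEquiv.symm_apply_eq _).mpr (kerLift_mk f a).symm
  rw [AddEquiv.trans_apply, hf_symm]
  exact kerLift_mk g a

theorem ker_mk'_comp_codRestrict {A B : Type*} [AddGroup A] [AddCommGroup B]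
    (f : A →+ B) (H N : AddSubgroup B) (hf : ∀ a, f a ∈ H) :
    ((mk' (N.addSubgroupOf H)).comp (f.codRestrict H hf)).ker = N.comap f := by
  ext a
  simp only [AddMonoidHom.mem_ker, AddMonoidHom.comp_apply, mk'_apply, eq_zero_iff,
    AddSubgroup.mem_addSubgroupOf, AddSubgroup.mem_comap, AddMonoidHom.codRestrict_apply]

theorem surjective_mk'_comp_codRestrict {A B : Type*} [AddGroup A] [AddCommGroup B]
    (f : A →+ B) (N : AddSubgroup B) {H : AddSubgroup B} (hH : f.range = H)
    (hf : ∀ a, f a ∈ H) :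
    Function.Surjective ((mk' (N.addSubgroupOf H)).comp (f.codRestrict H hf)) := by
  refine (mk'_surjective _).comp fun ⟨b, hb⟩ => ?_
  obtain ⟨a, rfl⟩ := hH ▸ hb
  exact ⟨a, rfl⟩

theorem exists_addEquiv_quotient_addSubgroupOf_of_comap_eq {A B B' : Type*} [AddGroup A]
    [AddCommGroup B] [AddCommGroup B'] (f : A →+ B) (g : A →+ B')
    {H N : AddSubgroup B} {H' N' : AddSubgroup B'} (hf : f.range = H) (hg : g.range = H')
    (h : N.comap f = N'.comap g) :
    ∃ e : (H ⧸ N.addSubgroupOf H) ≃+ (H' ⧸ N'.addSubgroupOf H'),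
      ∀ a (ha : f a ∈ H) (ha' : g a ∈ H'),
        e (mk' (N.addSubgroupOf H) ⟨f a, ha⟩) = mk' (N'.addSubgroupOf H') ⟨g a, ha'⟩ := by
  have hfH : ∀ a, f a ∈ H := fun a => hf ▸ ⟨a, rfl⟩
  have hgH : ∀ a, g a ∈ H' := fun a => hg ▸ ⟨a, rfl⟩
  obtain ⟨e, he⟩ := exists_addEquiv_comp_eq_of_ker_eq
    (surjective_mk'_comp_codRestrict f N hf hfH) (surjective_mk'_comp_codRestrict g N' hg hgH)
    (by rw [ker_mk'_comp_codRestrict, ker_mk'_comp_codRestrict, h])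
  exact ⟨e, fun a _ _ => he a⟩

theorem injective_quotientMapAddSubgroupOfOfLe {G : Type*} [AddCommGroup G]
    {N H K : AddSubgroup G} (h : H ≤ K) :
    Function.Injective (quotientMapAddSubgroupOfOfLe (le_refl N) h) := by
  refine (injective_iff_map_eq_zero _).mpr fun x hx => ?_
  induction x using QuotientAddGroup.induction_on with
  | H x =>
    rw [quotientMapAddSubgroupOfOfLe_mk, eq_zero_iff, AddSubgroup.mem_addSubgroupOf] at hx
    exact (eq_zero_iff _).mpr ((AddSubgroup.mem_addSubgroupOf).mpr hx)

namespace UnrolledExactCouple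

variable (C : UnrolledExactCouple) (n : ℤ)

lemma cast_cast {s t u : ℤ} (h₁ : s = t) (h₂ : t = u) (a : C.A n s) :
    C.cast n h₂ (C.cast n h₁ a) = C.cast n (h₁.trans h₂) a := by
  subst h₁ h₂; rfl

lemma tr_eq_ipow {t s : ℤ} (h : s ≤ t) (r : ℕ) (hr : t = s + r) (a : C.A n t) :
    C.tr n t s h a = C.ipow n r s (C.cast n hr a) := by
  obtain rfl : (t - s).toNat = r := by omega
  rfl

lemma tr_self {s : ℤ} (h : s ≤ s) (a : C.A n s) : C.tr n s s h a = a := by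
  rw [C.tr_eq_ipow n h 0 (by simp)]
  exact C.cast_cast n _ _ a

lemma tr_eq_i_tr {t s : ℤ} (h : s ≤ t) (h' : s + 1 ≤ t) (a : C.A n t) :
    C.tr n t s h a = C.i n s (C.tr n t (s + 1) h' a) := by
  obtain ⟨r, hr⟩ : ∃ r : ℕ, t = s + 1 + r := ⟨(t - (s + 1)).toNat, by omega⟩
  rw [C.tr_eq_ipow n h (r + 1) (by push_cast; omega), C.tr_eq_ipow n h' r hr]
  exact congrArg (C.i n s) (congrArg (C.ipow n r (s + 1)) (C.cast_cast n _ _ a))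

lemma tr_tr {u t s : ℤ} (h₁ : u ≤ t) (h₂ : t ≤ s) (a : C.A n s) :
    C.tr n t u h₁ (C.tr n s t h₂ a) = C.tr n s u (h₁.trans h₂) a := by
  obtain ⟨k, hk⟩ : ∃ k : ℕ, t = u + k := ⟨(t - u).toNat, by omega⟩
  induction k generalizing u with
  | zero =>
    obtain rfl : u = t := by omega
    rw [tr_self]
  | succ k ih =>
    rw [C.tr_eq_i_tr n h₁ (by omega), ih (by omega) (by push_cast at hk ⊢; omega),
      ← C.tr_eq_i_tr n]

lemma tr_succ (s : ℤ) (h : s ≤ s + 1) (a : C.A n (s + 1)) :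
    C.tr n (s + 1) s h a = C.i n s a := by
  rw [C.tr_eq_i_tr n h le_rfl, tr_self]

instance : DirectedSystem (fun s : ℤᵒᵈ => C.A n (OrderDual.ofDual s))
    (fun s t h => (C.tr n (OrderDual.ofDual s) (OrderDual.ofDual t) h : _ → _)) where
  map_self _ x := C.tr_self n _ x
  map_map _ _ _ hij hjk x := C.tr_tr n hjk hij x

lemma kappa_tr {t s : ℤ} (h : t ≤ s) (a : C.A n s) :
    C.kappa n t (C.tr n s t h a) = C.kappa n s a :=
  AddCommGroup.DirectLimit.of_f (G := fun s : ℤᵒᵈ => C.A n (OrderDual.ofDual s))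
    (f := fun s t h => C.tr n (OrderDual.ofDual s) (OrderDual.ofDual t) h)
    (i := OrderDual.toDual s) (j := OrderDual.toDual t) h a

lemma kappa_comp_i (s : ℤ) : (C.kappa n s).comp (C.i n s) = C.kappa n (s + 1) := by
  ext a
  rw [AddMonoidHom.comp_apply, ← C.tr_succ n s (by omega), kappa_tr]

lemma F_succ_eq_map (s : ℤ) : C.F n (s + 1) = (C.i n s).range.map (C.kappa n s) := by
  rw [F, ← kappa_comp_i, AddMonoidHom.range_comp]

lemma exists_tr_eq_zero_of_kappa_eq_zero {s : ℤ} {a : C.A n s} (ha : C.kappa n s a = 0) :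
    ∃ (t : ℤ) (h : t ≤ s), C.tr n s t h a = 0 :=
  let ⟨t, h, hat⟩ := AddCommGroup.DirectLimit.of.zero_exact
    (G := fun s : ℤᵒᵈ => C.A n (OrderDual.ofDual s))
    (f := fun s t h => C.tr n (OrderDual.ofDual s) (OrderDual.ofDual t) h)
    (OrderDual.toDual s) a ha
  ⟨OrderDual.ofDual t, h, hat⟩

lemma ker_tr_congr {s t t' : ℤ} (h : t = t') (ht : t ≤ s) (ht' : t' ≤ s) :
    (C.tr n s t ht).ker = (C.tr n s t' ht').ker := by
  subst h; rfl

lemma ker_kappa_eq_iSup (s : ℤ) :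
    (C.kappa n s).ker = ⨆ r : ℕ, (C.tr n s (s - r) (by omega)).ker := by
  refine le_antisymm (fun a ha => ?_) (iSup_le fun r a ha => ?_)
  · obtain ⟨t, hts, hat⟩ := C.exists_tr_eq_zero_of_kappa_eq_zero n ha
    refine AddSubgroup.mem_iSup_of_mem (s - t).toNat ?_
    rw [C.ker_tr_congr n (by omega) _ hts]
    exact hat
  · rw [AddMonoidHom.mem_ker, ← C.kappa_tr n (by omega : s - r ≤ s), AddMonoidHom.mem_ker.mp ha,
      map_zero]

lemma Binf_eq_map_ker_kappa (s : ℤ) : C.Binf n s = (C.kappa n s).ker.map (C.j n s) := by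
  rw [ker_kappa_eq_iSup, AddSubgroup.map_iSup]
  rfl

lemma comap_j_Binf_eq_comap_kappa_F_succ (s : ℤ) :
    (C.Binf n s).comap (C.j n s) = (C.F n (s + 1)).comap (C.kappa n s) := by
  rw [Binf_eq_map_ker_kappa, F_succ_eq_map, AddSubgroup.comap_map_eq, AddSubgroup.comap_map_eq,
    ← C.exact_ij, sup_comm]

lemma ker_d_le_Zinf (s : ℤ) : (C.d n s).ker ≤ C.Zinf n s := fun _ hx =>
  AddSubgroup.mem_iInf.mpr fun _ => AddSubgroup.mem_comap.mpr (hx.symm ▸ zero_mem _)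

end UnrolledExactCouple

/-- For an unrolled exact couple, the kernel of the composite
`A n s → G n → G n ⧸ F^{s+1} G n` is exactly `j⁻¹(B_∞^{n,s})`.  Consequently `κ_s` and `j`
induce an isomorphism `F^s G n ⧸ F^{s+1} G n ≅ ker ∂ ⧸ B_∞^{n,s}`, and in particular the
associated graded of the abutment filtration injects into `E_∞^{n,s} = Z_∞^{n,s} ⧸ B_∞^{n,s}`. -/
theorem UnrolledExactCouple.graded_comparison
    (C : UnrolledExactCouple) (n s : ℤ) :
    -- the kernel of `A n s → G n ⧸ F^{s+1} G n` is `j⁻¹(B_∞^{n,s})`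
    ((QuotientAddGroup.mk' (C.F n (s + 1))).comp (C.kappa n s)).ker
        = (C.Binf n s).comap (C.j n s) ∧
    -- `κ_s` and `j` induce an isomorphism `F^s G n ⧸ F^{s+1} G n ≅ ker ∂ ⧸ B_∞^{n,s}`
    (∃ e : (C.F n s ⧸ (C.F n (s + 1)).addSubgroupOf (C.F n s)) ≃+
        ((C.d n s).ker ⧸ (C.Binf n s).addSubgroupOf (C.d n s).ker),
      ∀ a : C.A n s,
        e ((QuotientAddGroup.mk' ((C.F n (s + 1)).addSubgroupOf (C.F n s)))
            ⟨C.kappa n s a, ⟨a, rfl⟩⟩)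
          = (QuotientAddGroup.mk' ((C.Binf n s).addSubgroupOf (C.d n s).ker))
              ⟨C.j n s a, by rw [← C.exact_jd n s]; exact ⟨a, rfl⟩⟩) ∧
    -- in particular, the associated graded injects into `E_∞^{n,s} = Z_∞ ⧸ B_∞`
    (∃ φ : (C.F n s ⧸ (C.F n (s + 1)).addSubgroupOf (C.F n s)) →+
        (C.Zinf n s ⧸ (C.Binf n s).addSubgroupOf (C.Zinf n s)),
      Function.Injective φ ∧
      ∀ a : C.A n s,
        φ ((QuotientAddGroup.mk' ((C.F n (s + 1)).addSubgroupOf (C.F n s)))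
            ⟨C.kappa n s a, ⟨a, rfl⟩⟩)
          = (QuotientAddGroup.mk' ((C.Binf n s).addSubgroupOf (C.Zinf n s)))
              ⟨C.j n s a, AddSubgroup.mem_iInf.mpr fun r =>
                AddSubgroup.mem_comap.mpr (by
                  have : C.j n s a ∈ (C.d n s).ker := by
                    rw [← C.exact_jd n s]; exact ⟨a, rfl⟩
                  rw [AddMonoidHom.mem_ker] at this
                  rw [this]; exact zero_mem _)⟩) := by
  have hker := C.comap_j_Binf_eq_comap_kappa_F_succ n s
  obtain ⟨e, he⟩ := exists_addEquiv_quotient_addSubgroupOf_of_comap_eq (C.kappa n s) (C.j n s)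
    rfl (C.exact_jd n s) hker.symm
  refine ⟨by rw [← AddMonoidHom.comap_ker, ker_mk', hker], ⟨e, fun a => he a _ _⟩, ?_⟩
  let q := quotientMapAddSubgroupOfOfLe (le_refl (C.Binf n s)) (C.ker_d_le_Zinf n s)
  exact ⟨q.comp e.toAddMonoidHom, (injective_quotientMapAddSubgroupOfOfLe _).comp e.injective,
    fun a => congrArg q (he a ⟨a, rfl⟩ (C.exact_jd n s ▸ ⟨a, rfl⟩))⟩
end
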